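/- Let γ be a finitely supported integer sequence and i a positive integer, and let η = (γ_1, …, γ_{i−1}, γ_{i+1} − 1, γ_i + 1, γ_{i+2}, …) be obtained from γ by swapping entries i and i+1 and correcting by subtracting 1 from the new i-th entry and adding 1 to the new (i+1)-st entry. Then χ^γ = −χ^η, where χ^γ := Σ_{σ ∈ S_l} sgn(σ) ξ^{γ + σ − id_l} for any l with γ supported in positions 1,…,l. -/

import Mathlib

open Finsupp
open scoped Classical

/-- The row index of `k` in the standard tabloid of shape `α`: the least `i` such that
`k < α 0 + ⋯ + α i`. -/
noncomputable def rowIdx (α : ℕ →₀ ℤ) (k : ℕ) : ℕ := sInf {i | (k : ℤ) < ∑ j ∈ Finset.range (i + 1), α j}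

/-- The Young subgroup of `S_n` associated to `α`: the stabilizer of the standard tabloid
whose rows are the consecutive blocks of `{0, …, n-1}` of sizes `α 0, α 1, …`. -/
def youngSubgroup (n : ℕ) (α : ℕ →₀ ℤ) : Subgroup (Equiv.Perm (Fin n)) where
  carrier := {σ | ∀ k : Fin n, rowIdx α (σ k) = rowIdx α k}
  one_mem' := fun _ => rfl
  mul_mem' := by
    intro a b ha hb k
    simpa [Equiv.Perm.mul_apply] using (ha (b k)).trans (hb k)
  inv_mem' := by
    intro a ha k
    have := ha (a⁻¹ k)
    rw [← Equiv.Perm.mul_apply, mul_inv_cancel, Equiv.Perm.one_apply] at this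
    exact this.symm

/-- The value at `g` of the permutation character of `G` acting on the cosets of `H`:
the number of fixed cosets.  This is the value of the character induced from the
trivial character of `H`. -/
noncomputable def permCharValue {n : ℕ} (H : Subgroup (Equiv.Perm (Fin n)))
    (g : Equiv.Perm (Fin n)) : ℤ :=
  Nat.card {x : Equiv.Perm (Fin n) ⧸ H // g • x = x}

/-- `ξ^α`, as a function on `S_n`: the permutation character induced from the trivial
character of the Young subgroup `S_α` when `α` is nonnegative with `|α| = n`, and `0`
otherwise. -/
noncomputable def xi (n : ℕ) (α : ℕ →₀ ℤ) (g : Equiv.Perm (Fin n)) : ℤ :=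
  if (∀ i, 0 ≤ α i) ∧ (α.sum fun _ v => v) = (n : ℤ) then permCharValue (youngSubgroup n α) g
  else 0

/-- An `α`-tabloid: a sequence of pairwise disjoint subsets of `{0,…,n-1}` with
`|t i| = α i` for every `i`. -/
def IsTabloid (n : ℕ) (α : ℕ →₀ ℤ) (t : ℕ → Finset (Fin n)) : Prop :=
  (∀ i j, i ≠ j → Disjoint (t i) (t j)) ∧ ∀ i, ((t i).card : ℤ) = α i

/-- The multiset of (nonzero) parts of a finitely supported sequence. -/
def partsOf (β : ℕ →₀ ℕ) : Multiset ℕ := β.support.val.map β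

/-- `σ` has cycle type `β` (with `1`s in `β` recording fixed points). -/
def HasCycleType {n : ℕ} (σ : Equiv.Perm (Fin n)) (β : ℕ →₀ ℕ) : Prop :=
  (β.sum fun _ v => v) = n ∧ σ.cycleType = Multiset.filter (fun k => 2 ≤ k) (partsOf β)

/-- A nonnegative sequence regarded as an integer sequence. -/
noncomputable def natToZ (β : ℕ →₀ ℕ) : ℕ →₀ ℤ := Finsupp.mapRange Int.ofNat rfl β

/-- The virtual character `χ^α = ∑_{σ ∈ S_l} sgn σ · ξ^{α + σ - id_l}` (0-indexed,
the sequence `α + σ - id_l` has `i`-th entry `α i + σ i - i`). -/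
noncomputable def chi (n l : ℕ) (α : ℕ →₀ ℤ) (g : Equiv.Perm (Fin n)) : ℤ :=
  ∑ σ : Equiv.Perm (Fin l),
    (Equiv.Perm.sign σ : ℤ) *
      xi n (α + ∑ i : Fin l, Finsupp.single (i : ℕ) (((σ i : ℕ) : ℤ) - (i : ℕ))) g

/-- `ζ^α`, the irreducible character of `S_n` corresponding to the partition `α` of `n`,
given by the determinantal formula `ζ^α = χ^α` (with `l = n ≥ l(α)`). -/
noncomputable def zeta (n : ℕ) (α : ℕ →₀ ℕ) (g : Equiv.Perm (Fin n)) : ℤ :=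
  chi n n (natToZ α) g

/-- `α` is a partition of `n`: weakly decreasing with `|α| = n`. -/
def IsPartitionOf (α : ℕ →₀ ℕ) (n : ℕ) : Prop :=
  (∀ i, α (i + 1) ≤ α i) ∧ (α.sum fun _ v => v) = n

/-!
Write `s` for the transposition `(i, i+1)`. The corrected swap says exactly that
`η - id = (γ - id) ∘ s`, so for every `σ ∈ S_l` the sequence `η + σ s - id_l` is `γ + σ - id_l`
with its entries `i` and `i+1` exchanged. Reindexing the sum defining `χ^η` by `σ ↦ σ s` flips
every sign, so it remains to see that `ξ^α` does not change when the entries of `α` are permuted.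
The row-index maps of the standard tabloids of `α` and of a rearrangement of `α` have fibres of
the same sizes, hence differ by a permutation `c` of `{0, …, n-1}`; the two Young subgroups are
then conjugate by `c`, and conjugate subgroups have the same permutation character.
-/

section RowIndex

variable {α : ℕ →₀ ℤ}

lemma exists_forall_ge_sum_range_eq_finsuppSum (α : ℕ →₀ ℤ) :
    ∃ L, ∀ m ≥ L, ∑ j ∈ Finset.range m, α j = α.sum fun _ v => v := by
  obtain ⟨L, hL⟩ := α.support.exists_nat_subset_range
  exact ⟨L, fun m hm => (α.sum_of_support_subset
    (hL.trans (Finset.range_subset_range.2 hm)) (fun _ v => v) fun _ _ => rfl).symm⟩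

lemma sum_range_le_finsuppSum (hα : ∀ j, 0 ≤ α j) (m : ℕ) :
    ∑ j ∈ Finset.range m, α j ≤ α.sum fun _ v => v := by
  obtain ⟨L, hL⟩ := exists_forall_ge_sum_range_eq_finsuppSum α
  rw [← hL (max m L) (le_max_right m L)]
  exact Finset.sum_le_sum_of_subset_of_nonneg
    (Finset.range_subset_range.2 (le_max_left m L)) fun j _ _ => hα j

lemma rowIdx_eq_iff (hα : ∀ j, 0 ≤ α j) {k : ℕ} (hk : (k : ℤ) < α.sum fun _ v => v) (m : ℕ) :
    rowIdx α k = m ↔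
      ∑ j ∈ Finset.range m, α j ≤ k ∧ (k : ℤ) < ∑ j ∈ Finset.range (m + 1), α j := by
  have hne : {i | (k : ℤ) < ∑ j ∈ Finset.range (i + 1), α j}.Nonempty := by
    obtain ⟨L, hL⟩ := exists_forall_ge_sum_range_eq_finsuppSum α
    exact ⟨L, by rwa [Set.mem_ofPred, hL (L + 1) L.le_succ]⟩
  rw [rowIdx, csInf_eq_iff hne, Set.mem_ofPred, and_comm]
  refine and_congr_left' ⟨fun h => ?_, fun h j hj => ?_⟩
  · cases m with
    | zero => simp
    | succ m => exact not_lt.1 fun hlt => (h m hlt).not_gt m.lt_succ_self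
  · by_contra! hjm
    exact (Set.mem_ofPred.1 hj).not_ge <| le_trans (Finset.sum_le_sum_of_subset_of_nonneg
      (Finset.range_subset_range.2 hjm) fun j _ _ => hα j) h

lemma card_fin_subtype_Ico {n a b : ℕ} (hb : b ≤ n) :
    Fintype.card {k : Fin n // a ≤ k ∧ (k : ℕ) < b} = b - a := by
  rw [← Nat.card_Ico, ← Fintype.card_coe]
  exact Fintype.card_congr
    { toFun := fun k => ⟨k.1, Finset.mem_Ico.2 k.2⟩
      invFun := fun x => ⟨⟨x, (Finset.mem_Ico.1 x.2).2.trans_le hb⟩, Finset.mem_Ico.1 x.2⟩ }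

lemma card_rowIdx_fiber {n : ℕ} (hα : ∀ j, 0 ≤ α j) (hsum : (α.sum fun _ v => v) = n) (m : ℕ) :
    (Fintype.card {k : Fin n // rowIdx α k = m} : ℤ) = α m := by
  have hlo := Finset.sum_nonneg fun j (_ : j ∈ Finset.range m) => hα j
  have hhi : ∑ j ∈ Finset.range m, α j + α m ≤ n := by
    rw [← Finset.sum_range_succ, ← hsum]
    exact sum_range_le_finsuppSum hα (m + 1)
  rw [Fintype.card_congr (Equiv.subtypeEquivRight fun k : Fin n =>
    rowIdx_eq_iff hα (hsum ▸ by exact_mod_cast k.2) m), Finset.sum_range_succ]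
  lift ∑ j ∈ Finset.range m, α j to ℕ using hlo with a
  lift α m to ℕ using hα m with b
  have hcard := card_fin_subtype_Ico (n := n) (a := a) (b := a + b) (by omega)
  rw [Nat.add_sub_cancel_left] at hcard
  exact_mod_cast hcard

end RowIndex

section YoungSubgroupConj

variable {n : ℕ} {α α' : ℕ →₀ ℤ}

lemma finsuppSum_comp_perm (π : Equiv.Perm ℕ) (h : ∀ j, α' j = α (π j)) :
    (α'.sum fun _ v => v) = α.sum fun _ v => v :=
  Finset.sum_equiv π (by simp [h]) fun j _ => h j

lemma exists_perm_rowIdx_comp (hα : ∀ j, 0 ≤ α j) (hsum : (α.sum fun _ v => v) = n)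
    (π : Equiv.Perm ℕ) (h : ∀ j, α' j = α (π j)) :
    ∃ c : Equiv.Perm (Fin n), ∀ k, rowIdx α' (c k) = π.symm (rowIdx α k) := by
  have hα' : ∀ j, 0 ≤ α' j := fun j => h j ▸ hα _
  have hsum' := (finsuppSum_comp_perm π h).trans hsum
  have e (j : ℕ) :
      {k : Fin n // π.symm (rowIdx α k) = j} ≃ {k : Fin n // rowIdx α' k = j} := by
    refine Fintype.equivOfCardEq ?_
    rw [Fintype.card_congr (Equiv.subtypeEquivRight fun k => π.symm_apply_eq)]
    exact_mod_cast (card_rowIdx_fiber hα hsum (π j)).trans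
      ((h j).symm.trans (card_rowIdx_fiber hα' hsum' j).symm)
  exact ⟨Equiv.ofFiberEquiv e, Equiv.ofFiberEquiv_map e⟩

lemma mem_youngSubgroup_iff_conj_mem {c : Equiv.Perm (Fin n)} {π : ℕ → ℕ}
    (hπ : Function.Injective π) (hc : ∀ k, rowIdx α' (c k) = π (rowIdx α k))
    (τ : Equiv.Perm (Fin n)) :
    τ ∈ youngSubgroup n α' ↔ c⁻¹ * τ * c ∈ youngSubgroup n α := by
  refine (c.forall_congr fun k => ?_).symm
  rw [← hπ.eq_iff, ← hc, ← hc]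
  simp

end YoungSubgroupConj

lemma permCharValue_eq_of_conj {n : ℕ} {H H' : Subgroup (Equiv.Perm (Fin n))}
    (c : Equiv.Perm (Fin n)) (hc : ∀ τ, τ ∈ H' ↔ c⁻¹ * τ * c ∈ H) (g : Equiv.Perm (Fin n)) :
    permCharValue H' g = permCharValue H g := by
  let e : Equiv.Perm (Fin n) ⧸ H' ≃ Equiv.Perm (Fin n) ⧸ H :=
    Quotient.congr (Equiv.mulRight c) fun a b => by
      rw [QuotientGroup.leftRel_apply, QuotientGroup.leftRel_apply, hc]
      simp [mul_assoc]
  have he (x) : e (g • x) = g • e x := by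
    induction x using QuotientGroup.induction_on with
    | H a => exact congrArg _ (mul_assoc g a c)
  unfold permCharValue
  exact congrArg _ (Nat.card_congr (e.subtypeEquiv fun x => by rw [← he, e.apply_eq_iff_eq]))

theorem xi_comp_perm (n : ℕ) {α α' : ℕ →₀ ℤ} (π : Equiv.Perm ℕ) (h : ∀ j, α' j = α (π j))
    (g : Equiv.Perm (Fin n)) : xi n α' g = xi n α g := by
  have hpos : (∀ j, 0 ≤ α' j) ↔ ∀ j, 0 ≤ α j := by
    simp only [h]
    exact π.forall_congr_right (q := fun j => 0 ≤ α j)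
  unfold xi
  rw [finsuppSum_comp_perm π h, hpos]
  split_ifs with hα
  · obtain ⟨c, hc⟩ := exists_perm_rowIdx_comp hα.1 hα.2 π h
    exact permCharValue_eq_of_conj c (mem_youngSubgroup_iff_conj_mem π.symm.injective hc) g
  · rfl

section Chi

variable {l : ℕ}

lemma sum_single_fin_apply_val (v : Fin l → ℤ) (t : Fin l) :
    (∑ s : Fin l, Finsupp.single (s : ℕ) (v s)) t = v t := by
  simp [Finsupp.finsetSum_apply, Finsupp.single_apply, Fin.val_inj]

lemma sum_single_fin_apply_of_le (v : Fin l → ℤ) {j : ℕ} (hj : l ≤ j) :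
    (∑ s : Fin l, Finsupp.single (s : ℕ) (v s)) j = 0 := by
  simp only [Finsupp.finsetSum_apply, Finsupp.single_apply]
  exact Finset.sum_eq_zero fun s _ => if_neg (by omega)

theorem chi_eq_neg_of_swap (n : ℕ) {α β : ℕ →₀ ℤ} {a b : Fin l} (hab : a ≠ b)
    (h : ∀ j : ℕ, β j - j = α (Equiv.swap (a : ℕ) b j) - Equiv.swap (a : ℕ) b j)
    (g : Equiv.Perm (Fin n)) : chi n l β g = -chi n l α g := by
  have hshift (σ : Equiv.Perm (Fin l)) (j : ℕ) :
      (β + ∑ t : Fin l, Finsupp.single (t : ℕ) ((((σ * Equiv.swap a b) t : ℕ) : ℤ) - (t : ℕ))) j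
        = (α + ∑ t : Fin l, Finsupp.single (t : ℕ) (((σ t : ℕ) : ℤ) - (t : ℕ)))
            (Equiv.swap (a : ℕ) b j) := by
    have hj := h j
    by_cases hjl : j < l
    · obtain ⟨t, rfl⟩ : ∃ t : Fin l, (t : ℕ) = j := ⟨⟨j, hjl⟩, rfl⟩
      rw [← Fin.val_injective.map_swap] at hj ⊢
      simp only [Finsupp.add_apply, sum_single_fin_apply_val, Equiv.Perm.mul_apply]
      linarith
    · rw [Equiv.swap_apply_of_ne_of_ne (by omega) (by omega)] at hj ⊢
      simp only [Finsupp.add_apply, sum_single_fin_apply_of_le _ (not_lt.1 hjl)]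
      linarith
  unfold chi
  rw [← Equiv.sum_comp (Equiv.mulRight (Equiv.swap a b)), ← Finset.sum_neg_distrib]
  refine Finset.sum_congr rfl fun σ _ => ?_
  rw [Equiv.coe_mulRight, Equiv.Perm.sign_mul, Equiv.Perm.sign_swap hab,
    xi_comp_perm n (Equiv.swap (a : ℕ) b) (hshift σ)]
  push_cast
  ring

end Chi

theorem stmt5_general (l n : ℕ) (γ η : ℕ →₀ ℤ) (i : ℕ)
    (hi : i + 1 < l)
    (hη : η = (γ.update i (γ (i + 1) - 1)).update (i + 1) (γ i + 1)) :
    ∀ g : Equiv.Perm (Fin n), chi n l γ g = -chi n l η g := by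
  intro g
  have hdot (j : ℕ) : η j - j = γ (Equiv.swap i (i + 1) j) - Equiv.swap i (i + 1) j := by
    rw [hη, Equiv.swap_apply_def]
    simp only [Finsupp.update_apply]
    split_ifs <;> omega
  rw [chi_eq_neg_of_swap n (a := ⟨i, by omega⟩) (b := ⟨i + 1, hi⟩) (by simp) hdot g, neg_neg]

/-- `χ^γ = -χ^η` where `η` is obtained from `γ` by swapping entries `i` and `i+1` and
correcting: `η_i = γ_{i+1} - 1`, `η_{i+1} = γ_i + 1` (written `0`-indexed). -/
theorem stmt5 (l n : ℕ) (γ η : ℕ →₀ ℤ) (i : ℕ)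
    (hl : ∀ k, l ≤ k → γ k = 0) (hi : i + 1 < l)
    (hn : (γ.sum fun _ v => v) = (n : ℤ))
    (hη : η = (γ.update i (γ (i + 1) - 1)).update (i + 1) (γ i + 1)) :
    ∀ g : Equiv.Perm (Fin n), chi n l γ g = -chi n l η g :=
  stmt5_general l n γ η i hi hη
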